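/- Assume ∫₀^∞ 1/w(x) dx < ∞ and set k² = ∫₀^∞ 1/w dx. Then the squaring map g ↦ g² on H_w satisfies ‖g₁² − g₂²‖_w ≤ √(5+4k²) ‖g₁+g₂‖_w ‖g₁−g₂‖_w for all g₁, g₂ ∈ H_w; in particular the squaring map is Lipschitz continuous on bounded subsets of H_w. -/

import Mathlib

open MeasureTheory Set Filter

noncomputable section

/-- Inner product on the Filipović space `H_w`, for functions `g, h` with chosen
(weak) derivatives `g', h'`:  `⟨g,h⟩_w = g(0)h(0) + ∫₀^∞ w g' h'`. -/
def wInner (w g g' h h' : ℝ → ℝ) : ℝ :=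
  g 0 * h 0 + ∫ x in Ioi (0:ℝ), w x * g' x * h' x

/-- Norm on the Filipović space `H_w`. -/
def wNorm (w g g' : ℝ → ℝ) : ℝ := Real.sqrt (wInner w g g' g g')

/-- `w : ℝ≥0 → [1,∞)` continuous, increasing, with `w 0 = 1`. -/
structure IsWeight (w : ℝ → ℝ) : Prop where
  cont : ContinuousOn w (Ici 0)
  mono : MonotoneOn w (Ici 0)
  one_le : ∀ x ∈ Ici (0:ℝ), 1 ≤ w x
  at_zero : w 0 = 1

/-- `g ∈ H_w` with derivative `g'`: `g` is absolutely continuous on `[0,∞)` with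
a.e. derivative `g'`, and `∫₀^∞ w (g')² < ∞`. -/
def MemHw (w g g' : ℝ → ℝ) : Prop :=
  (∀ x ∈ Ici (0:ℝ), g x = g 0 + ∫ t in Ioc (0:ℝ) x, g' t) ∧
  (∀ x ∈ Ici (0:ℝ), IntegrableOn g' (Ioc 0 x)) ∧
  IntegrableOn (fun x => w x * g' x ^ 2) (Ioi 0)

/-- The reproducing kernel `h_x(y) = 1 + ∫₀^{min(x,y)} 1/w(s) ds`. -/
def hker (w : ℝ → ℝ) (x y : ℝ) : ℝ := 1 + ∫ s in Ioc (0:ℝ) (min x y), 1 / w s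

/-- Derivative of `h_x`. -/
def hker' (w : ℝ → ℝ) (x : ℝ) : ℝ → ℝ := (Iic x).indicator (fun s => 1 / w s)

/-!
Write `g₁² − g₂² = u v` with `u = g₁ + g₂`, `v = g₁ − g₂`, so that its derivative is
`u' v + u v'`. By Cauchy–Schwarz, `∫₀^∞ |g'| ≤ k ‖√w g'‖₂`, hence every `g ∈ H_w` satisfies the
pointwise bound `g(x)² ≤ (1 + k²) ‖g‖_w²`. Using `(a + b)² ≤ 2a² + 2b²` and this bound on `v`
and `u`, `∫ w (u' v + u v')² ≤ 4 (1 + k²) ‖u‖_w² ‖v‖_w²`, while `u(0)² v(0)² ≤ ‖u‖_w² ‖v‖_w²`.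
-/

theorem integrable_and_integral_abs_le_sqrt_mul_sqrt {α : Type*} [MeasurableSpace α]
    {μ : Measure α} {w g : α → ℝ} (hw : ∀ᵐ x ∂μ, 0 < w x) (hg : AEStronglyMeasurable g μ)
    (hinv : Integrable (fun x => 1 / w x) μ) (hsq : Integrable (fun x => w x * g x ^ 2) μ) :
    Integrable g μ ∧ ∫ x, |g x| ∂μ ≤ √(∫ x, 1 / w x ∂μ) * √(∫ x, w x * g x ^ 2 ∂μ) := by
  set f : α → ℝ := fun x => √(1 / w x)
  set h : α → ℝ := fun x => √(w x) * |g x|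
  have hf_sq : (fun x => f x ^ 2) =ᵐ[μ] fun x => 1 / w x := by
    filter_upwards [hw] with x hx
    exact Real.sq_sqrt (by positivity)
  have hh_sq : (fun x => h x ^ 2) =ᵐ[μ] fun x => w x * g x ^ 2 := by
    filter_upwards [hw] with x hx
    rw [mul_pow, Real.sq_sqrt hx.le, sq_abs]
  have hfh : (fun x => f x * h x) =ᵐ[μ] fun x => |g x| := by
    filter_upwards [hw] with x hx
    rw [← mul_assoc, ← Real.sqrt_mul (by positivity), one_div_mul_cancel hx.ne', Real.sqrt_one,
      one_mul]
  have hwm : AEMeasurable w μ :=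
    hinv.aemeasurable.inv.congr (ae_of_all _ fun x => by simp)
  have hf : MemLp f 2 μ :=
    (memLp_two_iff_integrable_sq hinv.aemeasurable.sqrt.aestronglyMeasurable).2
      (hinv.congr hf_sq.symm)
  have hh : MemLp h 2 μ :=
    (memLp_two_iff_integrable_sq (hwm.sqrt.aestronglyMeasurable.mul
      (continuous_abs.comp_aestronglyMeasurable hg))).2 (hsq.congr hh_sq.symm)
  refine ⟨(integrable_norm_iff hg).1 ((hf.integrable_mul hh).congr hfh), ?_⟩
  have holder := integral_mul_le_Lp_mul_Lq_of_nonneg Real.HolderConjugate.two_two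
    (ae_of_all _ fun x => Real.sqrt_nonneg _)
    (ae_of_all _ fun x => mul_nonneg (Real.sqrt_nonneg _) (abs_nonneg _))
    (by rwa [ENNReal.ofReal_ofNat]) (by rwa [ENNReal.ofReal_ofNat])
  simp only [Real.rpow_two, ← Real.sqrt_eq_rpow] at holder
  rwa [integral_congr_ae hfh, integral_congr_ae hf_sq, integral_congr_ae hh_sq] at holder

variable {w g g' u u' v v' : ℝ → ℝ}

lemma IsWeight.pos (hw : IsWeight w) {x : ℝ} (hx : 0 ≤ x) : 0 < w x :=
  zero_lt_one.trans_le (hw.one_le x hx)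

lemma IsWeight.ae_pos (hw : IsWeight w) : ∀ᵐ x ∂(volume.restrict (Ioi (0:ℝ))), 0 < w x :=
  (ae_restrict_mem measurableSet_Ioi).mono fun _ hx => hw.pos (le_of_lt hx)

lemma IsWeight.setIntegral_one_div_nonneg (hw : IsWeight w) :
    0 ≤ ∫ x in Ioi (0:ℝ), 1 / w x :=
  setIntegral_nonneg measurableSet_Ioi fun _ hx => (one_div_pos.2 (hw.pos (le_of_lt hx))).le

lemma IsWeight.setIntegral_mul_sq_nonneg (hw : IsWeight w) (g' : ℝ → ℝ) :
    0 ≤ ∫ x in Ioi (0:ℝ), w x * g' x ^ 2 :=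
  setIntegral_nonneg measurableSet_Ioi fun _ hx =>
    mul_nonneg (hw.pos (le_of_lt hx)).le (sq_nonneg _)

lemma wNorm_nonneg : 0 ≤ wNorm w g g' := Real.sqrt_nonneg _

lemma wNorm_sq (hw : IsWeight w) (g g' : ℝ → ℝ) :
    wNorm w g g' ^ 2 = g 0 ^ 2 + ∫ x in Ioi (0:ℝ), w x * g' x ^ 2 := by
  have hinner : wInner w g g' g g' = g 0 ^ 2 + ∫ x in Ioi (0:ℝ), w x * g' x ^ 2 := by
    simp only [wInner, mul_assoc, ← sq]
  rw [wNorm, hinner, Real.sq_sqrt (add_nonneg (sq_nonneg _) (hw.setIntegral_mul_sq_nonneg g'))]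

lemma MemHw.aestronglyMeasurable_deriv (h : MemHw w g g') :
    AEStronglyMeasurable g' (volume.restrict (Ioi 0)) :=
  (aemeasurable_Ioi_of_forall_Ioc fun t ht =>
    (h.2.1 t (mem_Ici.2 (le_of_lt ht))).aemeasurable).aestronglyMeasurable

lemma MemHw.add (hw : IsWeight w) (h₁ : MemHw w u u') (h₂ : MemHw w v v') :
    MemHw w (fun x => u x + v x) (fun x => u' x + v' x) := by
  refine ⟨fun x hx => ?_, fun x hx => (h₁.2.1 x hx).add (h₂.2.1 x hx), ?_⟩
  · dsimp only
    rw [integral_add (h₁.2.1 x hx) (h₂.2.1 x hx), h₁.1 x hx, h₂.1 x hx]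
    ring
  · have hmeas : AEStronglyMeasurable (fun x => w x * (u' x + v' x) ^ 2)
        (volume.restrict (Ioi 0)) :=
      ((hw.cont.mono Ioi_subset_Ici_self).aestronglyMeasurable measurableSet_Ioi).mul
        ((h₁.aestronglyMeasurable_deriv.add h₂.aestronglyMeasurable_deriv).pow 2)
    refine ((h₁.2.2.const_mul 2).add (h₂.2.2.const_mul 2)).mono' hmeas ?_
    filter_upwards [hw.ae_pos] with x hx
    rw [Real.norm_of_nonneg (by positivity)]
    calc w x * (u' x + v' x) ^ 2 ≤ w x * (2 * (u' x ^ 2 + v' x ^ 2)) :=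
          mul_le_mul_of_nonneg_left add_sq_le hx.le
      _ = 2 * (w x * u' x ^ 2) + 2 * (w x * v' x ^ 2) := by ring

lemma MemHw.neg (h : MemHw w g g') : MemHw w (fun x => -g x) (fun x => -g' x) := by
  refine ⟨fun x hx => ?_, fun x hx => (h.2.1 x hx).neg, by simpa only [neg_sq] using h.2.2⟩
  dsimp only
  rw [integral_neg, h.1 x hx]
  ring

lemma MemHw.sub (hw : IsWeight w) (h₁ : MemHw w u u') (h₂ : MemHw w v v') :
    MemHw w (fun x => u x - v x) (fun x => u' x - v' x) := by
  simpa only [sub_eq_add_neg] using h₁.add hw h₂.neg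

lemma MemHw.sq_le (hw : IsWeight w) (hk : IntegrableOn (fun x => 1 / w x) (Ioi 0))
    (h : MemHw w g g') {x : ℝ} (hx : 0 ≤ x) :
    g x ^ 2 ≤ (1 + ∫ s in Ioi (0:ℝ), 1 / w s) * wNorm w g g' ^ 2 := by
  set K := ∫ s in Ioi (0:ℝ), 1 / w s
  set C := ∫ s in Ioi (0:ℝ), w s * g' s ^ 2
  obtain ⟨hint, hcs⟩ := integrable_and_integral_abs_le_sqrt_mul_sqrt hw.ae_pos
    h.aestronglyMeasurable_deriv hk h.2.2
  have habs : |g x| ≤ |g 0| + √K * √C :=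
    calc |g x| = |g 0 + ∫ t in Ioc (0:ℝ) x, g' t| := by rw [← h.1 x hx]
      _ ≤ |g 0| + ∫ t in Ioc (0:ℝ) x, |g' t| :=
          (abs_add_le _ _).trans (add_le_add_right (abs_integral_le_integral_abs) _)
      _ ≤ |g 0| + ∫ t in Ioi (0:ℝ), |g' t| :=
          add_le_add_right (setIntegral_mono_set hint.abs
            (ae_of_all _ fun _ => abs_nonneg _) Ioc_subset_Ioi_self.eventuallyLE) _
      _ ≤ |g 0| + √K * √C := add_le_add_right hcs _
  have hK : √K ^ 2 = K := Real.sq_sqrt hw.setIntegral_one_div_nonneg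
  have hC : √C ^ 2 = C := Real.sq_sqrt (hw.setIntegral_mul_sq_nonneg g')
  rw [wNorm_sq hw, ← sq_abs]
  calc |g x| ^ 2 ≤ (|g 0| + √K * √C) ^ 2 := pow_le_pow_left₀ (abs_nonneg _) habs 2
    _ ≤ (1 + K) * (g 0 ^ 2 + C) := by
      nlinarith [sq_nonneg (√K * |g 0| - √C), sq_abs (g 0)]

lemma MemHw.setIntegral_mul_deriv_mul_sq_le (hw : IsWeight w)
    (hk : IntegrableOn (fun x => 1 / w x) (Ioi 0)) (hu : MemHw w u u') (hv : MemHw w v v') :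
    ∫ x in Ioi (0:ℝ), w x * (u' x * v x + u x * v' x) ^ 2 ≤
      4 * (1 + ∫ s in Ioi (0:ℝ), 1 / w s) * (wNorm w u u' ^ 2 * wNorm w v v' ^ 2) := by
  set M := 1 + ∫ s in Ioi (0:ℝ), 1 / w s
  set A := wNorm w u u'
  set B := wNorm w v v'
  have hM : 0 ≤ M := add_nonneg zero_le_one hw.setIntegral_one_div_nonneg
  have hIu : ∫ x in Ioi (0:ℝ), w x * u' x ^ 2 ≤ A ^ 2 := by
    rw [wNorm_sq hw]; linarith [sq_nonneg (u 0)]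
  have hIv : ∫ x in Ioi (0:ℝ), w x * v' x ^ 2 ≤ B ^ 2 := by
    rw [wNorm_sq hw]; linarith [sq_nonneg (v 0)]
  have hpointwise : ∀ x ∈ Ioi (0:ℝ), w x * (u' x * v x + u x * v' x) ^ 2 ≤
      2 * M * B ^ 2 * (w x * u' x ^ 2) + 2 * M * A ^ 2 * (w x * v' x ^ 2) := by
    intro x hx
    have hwx := hw.pos (le_of_lt hx)
    have hu2 := hu.sq_le hw hk (le_of_lt hx)
    have hv2 := hv.sq_le hw hk (le_of_lt hx)
    calc w x * (u' x * v x + u x * v' x) ^ 2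
        ≤ w x * (2 * ((u' x * v x) ^ 2 + (u x * v' x) ^ 2)) :=
          mul_le_mul_of_nonneg_left add_sq_le hwx.le
      _ = 2 * (w x * u' x ^ 2) * v x ^ 2 + 2 * (w x * v' x ^ 2) * u x ^ 2 := by ring
      _ ≤ 2 * (w x * u' x ^ 2) * (M * B ^ 2) + 2 * (w x * v' x ^ 2) * (M * A ^ 2) := by
          gcongr
      _ = 2 * M * B ^ 2 * (w x * u' x ^ 2) + 2 * M * A ^ 2 * (w x * v' x ^ 2) := by ring
  calc ∫ x in Ioi (0:ℝ), w x * (u' x * v x + u x * v' x) ^ 2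
      ≤ ∫ x in Ioi (0:ℝ), 2 * M * B ^ 2 * (w x * u' x ^ 2) + 2 * M * A ^ 2 * (w x * v' x ^ 2) :=
        integral_mono_of_nonneg (hw.ae_pos.mono fun _ hx => mul_nonneg hx.le (sq_nonneg _))
          ((hu.2.2.const_mul _).add (hv.2.2.const_mul _))
          ((ae_restrict_mem measurableSet_Ioi).mono hpointwise)
    _ = 2 * M * B ^ 2 * (∫ x in Ioi (0:ℝ), w x * u' x ^ 2) +
          2 * M * A ^ 2 * ∫ x in Ioi (0:ℝ), w x * v' x ^ 2 := by
        rw [integral_add (hu.2.2.const_mul _) (hv.2.2.const_mul _), integral_const_mul,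
          integral_const_mul]
    _ ≤ 2 * M * B ^ 2 * A ^ 2 + 2 * M * A ^ 2 * B ^ 2 := by gcongr
    _ = 4 * M * (A ^ 2 * B ^ 2) := by ring

theorem wNorm_mul_le (hw : IsWeight w) (hk : IntegrableOn (fun x => 1 / w x) (Ioi 0))
    (hu : MemHw w u u') (hv : MemHw w v v') :
    wNorm w (fun x => u x * v x) (fun x => u' x * v x + u x * v' x) ≤
      √(5 + 4 * ∫ s in Ioi (0:ℝ), 1 / w s) * wNorm w u u' * wNorm w v v' := by
  set K := ∫ s in Ioi (0:ℝ), 1 / w s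
  set A := wNorm w u u'
  set B := wNorm w v v'
  have hu0 : u 0 ^ 2 ≤ A ^ 2 := by
    rw [wNorm_sq hw]; linarith [hw.setIntegral_mul_sq_nonneg u']
  have hv0 : v 0 ^ 2 ≤ B ^ 2 := by
    rw [wNorm_sq hw]; linarith [hw.setIntegral_mul_sq_nonneg v']
  have hsq : wNorm w (fun x => u x * v x) (fun x => u' x * v x + u x * v' x) ^ 2 ≤
      (5 + 4 * K) * (A * B) ^ 2 := by
    rw [wNorm_sq hw]
    calc (u 0 * v 0) ^ 2 + ∫ x in Ioi (0:ℝ), w x * (u' x * v x + u x * v' x) ^ 2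
        ≤ A ^ 2 * B ^ 2 + 4 * (1 + K) * (A ^ 2 * B ^ 2) :=
          add_le_add (by rw [mul_pow]; exact mul_le_mul hu0 hv0 (sq_nonneg _) (sq_nonneg _))
            (hu.setIntegral_mul_deriv_mul_sq_le hw hk hv)
      _ = (5 + 4 * K) * (A * B) ^ 2 := by ring
  calc wNorm w (fun x => u x * v x) (fun x => u' x * v x + u x * v' x)
      ≤ √((5 + 4 * K) * (A * B) ^ 2) := Real.le_sqrt_of_sq_le hsq
    _ = √(5 + 4 * K) * A * B := by
      rw [Real.sqrt_mul' _ (sq_nonneg _), Real.sqrt_sq (mul_nonneg wNorm_nonneg wNorm_nonneg),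
        mul_assoc]

/-- the squaring map satisfies
`‖g₁² − g₂²‖_w ≤ √(5+4k²) ‖g₁+g₂‖_w ‖g₁−g₂‖_w`, `k² = ∫₀^∞ 1/w`. -/
theorem stmt7 (w : ℝ → ℝ) (hw : IsWeight w)
    (hk : IntegrableOn (fun x => 1 / w x) (Ioi 0))
    (g₁ g₁' g₂ g₂' : ℝ → ℝ) (h₁ : MemHw w g₁ g₁') (h₂ : MemHw w g₂ g₂') :
    wNorm w (fun x => g₁ x ^ 2 - g₂ x ^ 2)
        (fun x => 2 * g₁ x * g₁' x - 2 * g₂ x * g₂' x) ≤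
      Real.sqrt (5 + 4 * ∫ s in Ioi (0:ℝ), 1 / w s) *
        wNorm w (fun x => g₁ x + g₂ x) (fun x => g₁' x + g₂' x) *
        wNorm w (fun x => g₁ x - g₂ x) (fun x => g₁' x - g₂' x) := by
  have hsq : (fun x => g₁ x ^ 2 - g₂ x ^ 2) = fun x => (g₁ x + g₂ x) * (g₁ x - g₂ x) :=
    funext fun x => by ring
  have hderiv : (fun x => 2 * g₁ x * g₁' x - 2 * g₂ x * g₂' x) =
      fun x => (g₁' x + g₂' x) * (g₁ x - g₂ x) + (g₁ x + g₂ x) * (g₁' x - g₂' x) :=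
    funext fun x => by ring
  rw [hsq, hderiv]
  exact wNorm_mul_le hw hk (h₁.add hw h₂) (h₁.sub hw h₂)
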